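/- arXiv:1701.01160 — 2 statements merged into one kernel-verified Lean document; each statement's English description precedes it below -/
import Mathlib

section
/- For every real ε > 0 there exists a natural number N such that for all integers n ≥ N, every complex root α of the polynomial f_{1,n}(X) satisfies 1 ≤ |α| < 1 + ε. In particular, the absolute values of the roots of f_{1,n} tend to 1 as n → ∞. -/
/-!
Multiplying by `X - 1` telescopes the coefficients: `(X - 1) f1 n = X (1 + X + ⋯ + X^(n-1)) - n`,
and once more, `(X - 1)² f1 n = X^(n+1) - (n+1) X + n`. At a root `α` the first identity gives
`α (1 + α + ⋯ + α^(n-1)) = n`, impossible for `|α| < 1`, where the left side has modulus `< n`.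
The second gives `|α|^(n+1) ≤ (n+1)|α| + n ≤ (2n+1)|α|` when `|α| ≥ 1`, so `|α|^n ≤ 2n+1`,
which rules out `|α| ≥ 1 + ε` as soon as `(1+ε)^n` outgrows `2n+1`.
-/

open Polynomial

/-- `f1 n = X^(n-1) + 2 X^(n-2) + ⋯ + (n-1) X + n = Σ_{k=1}^n k · X^(n-k)` over `ℤ`. -/
noncomputable def f1 (n : ℕ) : Polynomial ℤ :=
  ∑ k ∈ Finset.Icc 1 n, C (k : ℤ) * X ^ (n - k)

open Finset Filter

lemma f1_zero : f1 0 = 0 := by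
  simp [f1]

lemma f1_succ (n : ℕ) : f1 (n + 1) = X * f1 n + ((n + 1 : ℕ) : ℤ[X]) := by
  rw [f1, f1, sum_Icc_succ_top (by omega), mul_sum, Nat.sub_self, pow_zero, mul_one, map_natCast]
  congr 1
  refine sum_congr rfl fun k hk => ?_
  rw [show n + 1 - k = n - k + 1 by have := (mem_Icc.mp hk).2; omega, pow_succ]
  ring

lemma X_sub_one_mul_f1 (n : ℕ) : (X - 1) * f1 n = X * ∑ i ∈ range n, X ^ i - (n : ℤ[X]) := by
  induction n with
  | zero => simp [f1_zero]
  | succ n ih =>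
    rw [f1_succ, geom_sum_succ]
    push_cast
    linear_combination X * ih

lemma X_sub_one_sq_mul_f1 (n : ℕ) :
    (X - 1) ^ 2 * f1 n = X ^ (n + 1) - (n + 1 : ℤ[X]) * X + (n : ℤ[X]) := by
  linear_combination (X - 1) * X_sub_one_mul_f1 n + X * mul_geom_sum (X : ℤ[X]) n

lemma norm_geom_sum_le {R : Type*} [NormedDivisionRing R] {z : R} (hz : ‖z‖ ≤ 1) (n : ℕ) :
    ‖∑ i ∈ range n, z ^ i‖ ≤ n := by
  calc ‖∑ i ∈ range n, z ^ i‖ ≤ ∑ i ∈ range n, ‖z‖ ^ i := by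
        simpa only [norm_pow] using norm_sum_le (range n) (z ^ ·)
    _ ≤ ∑ _i ∈ range n, (1 : ℝ) := sum_le_sum fun i _ => pow_le_one₀ (norm_nonneg z) hz
    _ = n := by simp

lemma one_le_norm_of_aeval_f1_eq_zero {n : ℕ} (hn : 1 ≤ n) {α : ℂ} (hα : aeval α (f1 n) = 0) :
    1 ≤ ‖α‖ := by
  by_contra! hlt
  have hsum : α * ∑ i ∈ range n, α ^ i = n := by
    have h := congrArg (aeval α) (X_sub_one_mul_f1 n)
    simp only [map_mul, map_sub, hα, map_sum, map_pow, aeval_X, map_natCast, mul_zero] at h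
    linear_combination -h
  have hn' : (0 : ℝ) < n := by exact_mod_cast hn
  refine lt_irrefl (n : ℝ) ?_
  calc (n : ℝ) = ‖α‖ * ‖∑ i ∈ range n, α ^ i‖ := by rw [← norm_mul, hsum, Complex.norm_natCast]
    _ ≤ ‖α‖ * n := mul_le_mul_of_nonneg_left (norm_geom_sum_le hlt.le n) (norm_nonneg α)
    _ < n := mul_lt_of_lt_one_left hn' hlt

lemma norm_pow_le_of_aeval_f1_eq_zero {n : ℕ} {α : ℂ} (hα : aeval α (f1 n) = 0)
    (h1 : 1 ≤ ‖α‖) : ‖α‖ ^ n ≤ 2 * n + 1 := by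
  have hpow : α ^ (n + 1) = (n + 1) * α - n := by
    have h := congrArg (aeval α) (X_sub_one_sq_mul_f1 n)
    simp only [map_mul, map_sub, map_add, hα, map_pow, aeval_X, map_natCast, map_one,
      mul_zero] at h
    linear_combination -h
  have hnorm : ‖α‖ ^ n * ‖α‖ ≤ (2 * n + 1) * ‖α‖ := calc
    ‖α‖ ^ n * ‖α‖ = ‖(n + 1) * α - n‖ := by rw [← pow_succ, ← norm_pow, hpow]
    _ ≤ (n + 1) * ‖α‖ + n := by
      refine (norm_sub_le _ _).trans_eq ?_
      rw [norm_mul, ← Nat.cast_succ, Complex.norm_natCast, Complex.norm_natCast, Nat.cast_succ]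
    _ ≤ (2 * n + 1) * ‖α‖ := by nlinarith
  exact le_of_mul_le_mul_right hnorm (by linarith)

lemma eventually_two_mul_add_one_lt_pow {r : ℝ} (hr : 1 < r) :
    ∀ᶠ n : ℕ in atTop, (2 * n + 1 : ℝ) < r ^ n := by
  have hlittleO := (isLittleO_coe_const_pow_of_one_lt (R := ℝ) hr).def (by norm_num : (0 : ℝ) < 1 / 4)
  filter_upwards [hlittleO, eventually_ge_atTop 1] with n hlin hn
  have hn' : (1 : ℝ) ≤ n := by exact_mod_cast hn
  rw [Real.norm_natCast, Real.norm_of_nonneg (by positivity)] at hlin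
  linarith

/-- For every `ε > 0` there is `N` such that for all `n ≥ N` every complex root `α`
of `f1 n` satisfies `1 ≤ |α| < 1 + ε`; i.e. the absolute values of the roots tend to `1`. -/
theorem stmt1 (ε : ℝ) (hε : 0 < ε) :
    ∃ N : ℕ, ∀ n : ℕ, N ≤ n → ∀ α : ℂ, Polynomial.aeval α (f1 n) = 0 →
      1 ≤ ‖α‖ ∧ ‖α‖ < 1 + ε := by
  obtain ⟨N, hN⟩ := eventually_atTop.mp
    ((eventually_two_mul_add_one_lt_pow (lt_add_of_pos_right 1 hε)).and (eventually_ge_atTop 1))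
  refine ⟨N, fun n hn α hα => ?_⟩
  obtain ⟨hgrowth, hn1⟩ := hN n hn
  have hlow := one_le_norm_of_aeval_f1_eq_zero hn1 hα
  refine ⟨hlow, lt_of_not_ge fun hge => ?_⟩
  have := pow_le_pow_left₀ (by linarith) hge n
  linarith [norm_pow_le_of_aeval_f1_eq_zero hα hlow]
end

section
/- Let n ≥ 4 be an integer such that p = n − 1 is an odd prime number, and assume that f_{1,n}(X), regarded as a polynomial over ℚ, is irreducible. Let K_n be the splitting field of f_{1,n} over ℚ and G_n = Gal(K_n/ℚ) its Galois group (the group of ℚ-algebra automorphisms of K_n). Then G_n is not abelian: there exist σ, τ ∈ G_n with σ∘τ ≠ τ∘σ. -/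
/-!
For even `n` the identity `(X - 1)² · f1Q n = X^(n+1) - (n+1) X + n` controls the real roots
of `f1Q n`: they all lie below `-1`, where the right-hand side is strictly increasing and
changes sign on `[-2, -1]`, so there is exactly one. As `f1Q n` is separable of degree
`n - 1 ≥ 3`, it also has a non-real root. Complex conjugation restricts to an element of the
Galois group fixing the real root. In an abelian group acting transitively on the roots, an
element fixing one root fixes them all, so every root would be real.
-/

open Polynomial

/-- `f1Q n = X^(n-1) + 2 X^(n-2) + ⋯ + (n-1) X + n = Σ_{k=1}^n k · X^(n-k)` over `ℚ`. -/
noncomputable def f1Q (n : ℕ) : Polynomial ℚ :=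
  ∑ k ∈ Finset.Icc 1 n, C (k : ℚ) * X ^ (n - k)

theorem MulAction.smul_eq_self_of_forall_commute {G α : Type*} [Group G] [MulAction G α]
    [MulAction.IsPretransitive G α] {g : G} (hg : ∀ h : G, Commute g h) {a : α}
    (ha : g • a = a) (b : α) : g • b = b := by
  obtain ⟨h, rfl⟩ := MulAction.exists_smul_eq G a b
  rw [← mul_smul, (hg h).eq, mul_smul, ha]

namespace Polynomial

attribute [local instance] Gal.splits_ℚ_ℂ

theorem aeval_ofReal_eq_zero_iff {p : ℚ[X]} {x : ℝ} : aeval (x : ℂ) p = 0 ↔ aeval x p = 0 := by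
  rw [← Complex.coe_algebraMap, aeval_algebraMap_eq_zero_iff]

theorem Gal.exists_mul_ne_mul_of_aeval_eq_zero_of_im_ne_zero {p : ℚ[X]} (hp : Irreducible p)
    {x : ℝ} (hx : aeval x p = 0) {z : ℂ} (hz : aeval z p = 0) (hz_im : z.im ≠ 0) :
    ∃ σ τ : p.Gal, σ * τ ≠ τ * σ := by
  by_contra! hcomm
  have := Gal.galAction_isPretransitive p ℂ hp
  let conj := Gal.restrict p ℂ (Complex.conjAe.restrictScalars ℚ)
  have hconj (w : p.rootSet ℂ) : ((conj • w : p.rootSet ℂ) : ℂ) = starRingEnd ℂ w :=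
    Gal.restrict_smul _ w
  have hp0 := hp.ne_zero
  let x' : p.rootSet ℂ := ⟨x, mem_rootSet.mpr ⟨hp0, aeval_ofReal_eq_zero_iff.mpr hx⟩⟩
  let z' : p.rootSet ℂ := ⟨z, mem_rootSet.mpr ⟨hp0, hz⟩⟩
  have hx' : conj • x' = x' := Subtype.ext <| by rw [hconj]; exact Complex.conj_ofReal x
  have hz' := MulAction.smul_eq_self_of_forall_commute (fun h => hcomm conj h) hx' z'
  exact hz_im (Complex.conj_eq_iff_im.mp (by rw [← hconj z', hz']))

theorem exists_aeval_eq_zero_im_ne_zero {p : ℚ[X]} (hsep : p.Separable) (hdeg : 2 ≤ p.natDegree)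
    (huniq : ∀ x y : ℝ, aeval x p = 0 → aeval y p = 0 → x = y) :
    ∃ z : ℂ, aeval z p = 0 ∧ z.im ≠ 0 := by
  have hcard : 1 < Fintype.card (p.rootSet ℂ) := by
    rw [card_rootSet_eq_natDegree hsep (IsAlgClosed.splits _)]; omega
  obtain ⟨z₁, z₂, hne⟩ := Fintype.exists_pair_of_one_lt_card hcard
  by_contra! hreal
  have hre (w : p.rootSet ℂ) : (w : ℂ) = (w : ℂ).re ∧ aeval (w : ℂ).re p = 0 := by
    have hw := (mem_rootSet.mp w.2).2
    have hw_eq : (w : ℂ) = (w : ℂ).re := Complex.ext rfl (by simpa using hreal _ hw)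
    refine ⟨hw_eq, ?_⟩
    rwa [hw_eq, aeval_ofReal_eq_zero_iff] at hw
  refine hne (Subtype.ext ?_)
  rw [(hre z₁).1, (hre z₂).1, huniq _ _ (hre z₁).2 (hre z₂).2]

end Polynomial

theorem f1Q_succ (n : ℕ) : f1Q (n + 1) = X * f1Q n + C ((n : ℚ) + 1) := by
  rw [f1Q, Finset.sum_Icc_succ_top (by omega), f1Q, Finset.mul_sum, Nat.sub_self, pow_zero,
    mul_one, Nat.cast_succ]
  congr 1
  refine Finset.sum_congr rfl fun k hk => ?_
  rw [Nat.sub_add_comm (Finset.mem_Icc.mp hk).2, pow_succ]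
  ring

theorem X_sub_one_sq_mul_f1Q (n : ℕ) :
    (X - 1) ^ 2 * f1Q n = X ^ (n + 1) - C ((n : ℚ) + 1) * X + C (n : ℚ) := by
  induction n with
  | zero => simp [f1Q]
  | succ n ih =>
    rw [f1Q_succ, mul_add, mul_left_comm, ih]
    simp only [Nat.cast_succ, C_add, C_1]
    ring

theorem natDegree_f1Q {n : ℕ} (hn : 1 ≤ n) : (f1Q n).natDegree = n - 1 := by
  have hg : (X ^ (n + 1) - C ((n : ℚ) + 1) * X + C (n : ℚ)).natDegree = n + 1 := by
    compute_degree!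
    simp [show n ≠ 0 by omega]
  have hX : (X - 1 : ℚ[X]) ^ 2 ≠ 0 := pow_ne_zero _ (X_sub_C_ne_zero 1)
  have hX1 : (X - 1 : ℚ[X]).natDegree = 1 := by compute_degree!
  have hf : f1Q n ≠ 0 := by
    rintro hf
    rw [← X_sub_one_sq_mul_f1Q, hf, mul_zero, natDegree_zero] at hg
    omega
  rw [← X_sub_one_sq_mul_f1Q, natDegree_mul hX hf, natDegree_pow, hX1] at hg
  omega

theorem Nat.three_mul_add_two_le_two_pow {n : ℕ} (hn : 2 ≤ n) : 3 * n + 2 ≤ 2 ^ (n + 1) := by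
  induction n, hn using Nat.le_induction with
  | base => norm_num
  | succ m _ ih => rw [pow_succ 2 (m + 1)]; linarith

theorem sub_one_sq_mul_aeval_f1Q (n : ℕ) (x : ℝ) :
    (x - 1) ^ 2 * aeval x (f1Q n) = x ^ (n + 1) - (n + 1) * x + n := by
  simpa using congrArg (aeval x) (X_sub_one_sq_mul_f1Q n)

section Real

variable {n : ℕ}

theorem aeval_f1Q_pos {x : ℝ} (hn : 1 ≤ n) (hx : 0 ≤ x) : 0 < aeval x (f1Q n) := by
  simp only [f1Q, map_sum, map_mul, aeval_C, map_pow, aeval_X, eq_ratCast, Rat.cast_natCast]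
  refine Finset.sum_pos' (fun k _ => by positivity) ⟨n, Finset.mem_Icc.mpr ⟨hn, le_rfl⟩, ?_⟩
  rw [Nat.sub_self, pow_zero, mul_one]
  exact_mod_cast hn

theorem lt_neg_one_of_aeval_f1Q_eq_zero (hn : n ≠ 0) (hev : Even n) {x : ℝ}
    (hx : aeval x (f1Q n) = 0) : x < -1 := by
  by_contra! hx1
  rcases le_or_gt 0 x with hx0 | hx0
  · exact (aeval_f1Q_pos (by omega) hx0).ne' hx
  · have hg := sub_one_sq_mul_aeval_f1Q n x
    rw [hx, mul_zero] at hg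
    have hpow : x ^ n ≤ 1 := by
      rw [← hev.pow_abs]
      exact pow_le_one₀ (abs_nonneg x) (abs_le.mpr ⟨hx1, by linarith⟩)
    have hx_le : x ≤ x ^ (n + 1) := by
      rw [pow_succ]; nlinarith
    have hn_pos : (0 : ℝ) < n := by exact_mod_cast Nat.pos_of_ne_zero hn
    nlinarith

theorem strictMonoOn_pow_succ_sub_mul (hn : n ≠ 0) (hev : Even n) :
    StrictMonoOn (fun x : ℝ => x ^ (n + 1) - (n + 1) * x) (Set.Iic (-1)) := by
  refine strictMonoOn_of_deriv_pos (convex_Iic _) (by fun_prop) fun x hx => ?_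
  rw [interior_Iic, Set.mem_Iio] at hx
  have hderiv : HasDerivAt (fun x : ℝ => x ^ (n + 1) - (n + 1) * x)
      (↑(n + 1) * x ^ n - (n + 1) * 1) x :=
    (hasDerivAt_pow (n + 1) x).sub ((hasDerivAt_id x).const_mul _)
  have hpow : 1 < x ^ n := by
    rw [← hev.pow_abs]
    exact one_lt_pow₀ (by rw [abs_of_neg (by linarith)]; linarith) hn
  rw [hderiv.deriv]
  push_cast
  have hn_pos : (0 : ℝ) < n + 1 := by positivity
  nlinarith

theorem eq_of_aeval_f1Q_eq_zero (hn : n ≠ 0) (hev : Even n) {x y : ℝ}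
    (hx : aeval x (f1Q n) = 0) (hy : aeval y (f1Q n) = 0) : x = y := by
  have hg (z : ℝ) (hz : aeval z (f1Q n) = 0) : z ^ (n + 1) - (n + 1) * z = -n := by
    linear_combination -(sub_one_sq_mul_aeval_f1Q n z) + (z - 1) ^ 2 * hz
  refine (strictMonoOn_pow_succ_sub_mul hn hev).injOn
    (lt_neg_one_of_aeval_f1Q_eq_zero hn hev hx).le
    (lt_neg_one_of_aeval_f1Q_eq_zero hn hev hy).le ?_
  simp only [hg x hx, hg y hy]

theorem exists_aeval_f1Q_eq_zero (hn : 2 ≤ n) (hev : Even n) :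
    ∃ x : ℝ, aeval x (f1Q n) = 0 := by
  have hpow : (3 * n + 2 : ℝ) ≤ 2 ^ (n + 1) := by exact_mod_cast Nat.three_mul_add_two_le_two_pow hn
  have hodd : Odd (n + 1) := hev.add_one
  have hcont : ContinuousOn (fun x : ℝ => x ^ (n + 1) - (n + 1) * x + n) (Set.Icc (-2) (-1)) := by
    fun_prop
  have hzero : (0 : ℝ) ∈ Set.Icc ((-2 : ℝ) ^ (n + 1) - (n + 1) * (-2) + n)
      ((-1 : ℝ) ^ (n + 1) - (n + 1) * (-1) + n) := by
    rw [hodd.neg_pow, hodd.neg_pow, one_pow]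
    constructor <;> linarith
  obtain ⟨x, hx_mem, hx⟩ := intermediate_value_Icc (by norm_num) hcont hzero
  have hx1 : (x - 1) ^ 2 ≠ 0 := by nlinarith [hx_mem.2]
  refine ⟨x, (mul_eq_zero.mp ?_).resolve_left hx1⟩
  rw [sub_one_sq_mul_aeval_f1Q]
  exact hx

end Real

theorem stmt10_general (n : ℕ) (hn : 4 ≤ n) (hodd : Odd (n - 1))
    (hirr : Irreducible (f1Q n)) :
    ∃ σ τ : (f1Q n).Gal, σ * τ ≠ τ * σ := by
  have hev : Even n := by
    obtain ⟨k, hk⟩ := hodd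
    exact ⟨k + 1, by omega⟩
  obtain ⟨x, hx⟩ := exists_aeval_f1Q_eq_zero (by omega) hev
  obtain ⟨z, hz, hz_im⟩ := exists_aeval_eq_zero_im_ne_zero hirr.separable
    (by rw [natDegree_f1Q (by omega)]; omega)
    (fun _ _ => eq_of_aeval_f1Q_eq_zero (by omega) hev)
  exact Gal.exists_mul_ne_mul_of_aeval_eq_zero_of_im_ne_zero hirr hx hz hz_im

/-- If `n ≥ 4`, `p = n − 1` is an odd prime, and `f1Q n` is irreducible over `ℚ`,
then the Galois group of the splitting field of `f1Q n` over `ℚ` is not abelian. -/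
theorem stmt10 (n : ℕ) (hn : 4 ≤ n) (hp : (n - 1).Prime) (hodd : Odd (n - 1))
    (hirr : Irreducible (f1Q n)) :
    ∃ σ τ : (f1Q n).Gal, σ * τ ≠ τ * σ :=
  stmt10_general n hn hodd hirr
end
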